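/- Let f : ℝ^n → ℝ be differentiable and μ-strongly convex with μ > 0, let a_1,…,a_m ∈ ℝ^n be nonzero and b_1,…,b_m ∈ ℝ, let X_i = {x : ⟨a_i,x⟩ ≤ b_i} and X = ∩_{i=1}^m X_i be nonempty, and let x* be the minimizer of f over X. Let γ > 0 and δ > 0, let x_γδ* be the minimizer of F_{γδ} over ℝ^n, and let p = Π_X[x_γδ*] be the Euclidean projection of x_γδ* onto X. Suppose β > 0 satisfies the Hoffman bound β Σ_{i=1}^m dist(x, X_i) ≥ dist(x, X) for all x ∈ ℝ^n, and suppose L > 0 satisfies ‖∇f(z)‖ ≤ L for all z on the segment joining x_γδ* and p and at x_γδ* and p themselves. Then (μ/2)‖x* − x_γδ*‖² + (μ/2)‖x* − p‖² + (γ/(4mβ) − L) dist(x_γδ*, X) ≤ γδ/(4 α_min), where α_min = min_{1≤i≤m} ‖a_i‖. -/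

import Mathlib

open scoped RealInnerProductSpace

/-- The one-sided Huber penalty `h_δ(x; a, b)`. -/
noncomputable def huber {n : ℕ} (δ : ℝ) (a : EuclideanSpace ℝ (Fin n)) (b : ℝ)
    (x : EuclideanSpace ℝ (Fin n)) : ℝ :=
  if δ < ⟪a, x⟫ - b then (⟪a, x⟫ - b) / ‖a‖
  else if -δ ≤ ⟪a, x⟫ - b then (⟪a, x⟫ - b + δ) ^ 2 / (4 * δ * ‖a‖)
  else 0

/-!
Strong convexity gives quadratic growth at a minimizer: comparing the penalized objective at
`x_γδ*` and `x*`, and `f` at `x*` and `p`, bounds the two squared distances by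
`P(x*) - P(x_γδ*) + f(p) - f(x_γδ*)`, where `P` is the penalty. By the mean value theorem
`f(p) - f(x_γδ*) ≤ L‖p - x_γδ*‖ = L dist(x_γδ*, X)`. Each Huber term is at most `δ/(4‖aᵢ‖)` on
its half-space, which bounds `P(x*)`, and dominates the distance to its half-space, so the
Hoffman bound gives `P(x_γδ*) ≥ γ dist(x_γδ*, X)/(mβ)`.
-/

open Filter Metric Set Topology

section StrongConvexity

variable {E : Type*} [NormedAddCommGroup E] [NormedSpace ℝ E] {s : Set E} {μ : ℝ} {f g : E → ℝ}

lemma StrongConvexOn.add_convexOn (hf : StrongConvexOn s μ f) (hg : ConvexOn ℝ s g) :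
    StrongConvexOn s μ (f + g) := by
  simpa [StrongConvexOn] using hf.add (uniformConvexOn_zero.2 hg)

lemma StrongConvexOn.add_sq_norm_sub_le_of_isMinOn (hf : StrongConvexOn s μ f) {x y : E}
    (hx : x ∈ s) (hy : y ∈ s) (hmin : IsMinOn f s x) :
    f x + μ / 2 * ‖y - x‖ ^ 2 ≤ f y := by
  set d := μ / 2 * ‖y - x‖ ^ 2
  have hstep : ∀ t ∈ Ioc (0 : ℝ) 1, f x + (1 - t) * d ≤ f y := by
    rintro t ⟨ht0, ht1⟩
    have hmem : t • y + (1 - t) • x ∈ s := hf.1 hy hx ht0.le (sub_nonneg.2 ht1) (by ring)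
    have hconv : f (t • y + (1 - t) • x) ≤ t * f y + (1 - t) * f x - t * (1 - t) * d :=
      hf.2 hy hx ht0.le (sub_nonneg.2 ht1) (by ring)
    have : t * (f x + (1 - t) * d) ≤ t * f y := by linarith [isMinOn_iff.1 hmin _ hmem]
    exact le_of_mul_le_mul_left this ht0
  have hlim : Tendsto (fun t : ℝ => f x + (1 - t) * d) (𝓝[>] 0) (𝓝 (f x + d)) :=
    tendsto_nhdsWithin_of_tendsto_nhds <| Continuous.tendsto' (by fun_prop) _ _ (by simp)
  exact le_of_tendsto hlim (eventually_of_mem (Ioc_mem_nhdsGT one_pos) hstep)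

end StrongConvexity

lemma convex_setOf_forall_inner_le {ι F : Type*} [NormedAddCommGroup F] [InnerProductSpace ℝ F]
    (a : ι → F) (b : ι → ℝ) : Convex ℝ {x | ∀ i, ⟪a i, x⟫ ≤ b i} := by
  rw [ofPred_forall]
  exact convex_iInter fun i => convex_halfSpace_le (innerₛₗ ℝ (a i)).isLinear (b i)

lemma Metric.infDist_eq_dist_of_forall_dist_le {α : Type*} [PseudoMetricSpace α] {s : Set α}
    {x p : α} (hp : p ∈ s) (h : ∀ y ∈ s, dist x p ≤ dist x y) : infDist x s = dist x p :=
  le_antisymm (infDist_le_dist_of_mem hp) ((le_infDist ⟨p, hp⟩).2 h)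

lemma sub_le_mul_norm_of_norm_gradient_le {F : Type*} [NormedAddCommGroup F]
    [InnerProductSpace ℝ F] [CompleteSpace F] {f : F → ℝ} (hf : Differentiable ℝ f) {x y : F}
    {L : ℝ} (hL : ∀ z ∈ segment ℝ x y, ‖gradient f z‖ ≤ L) :
    f y - f x ≤ L * ‖y - x‖ := by
  have hfd : ∀ z ∈ segment ℝ x y, ‖fderiv ℝ f z‖ ≤ L := fun z hz => by
    simpa [gradient] using hL z hz
  exact (le_abs_self _).trans <| (convex_segment x y).norm_image_sub_le_of_norm_fderiv_le
    (fun z _ => hf z) hfd (left_mem_segment ℝ x y) (right_mem_segment ℝ x y)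

/-- The maximum over `l ∈ [0, 1]` of the affine functions `r ↦ l * (r + δ) - δ * l ^ 2`,
attained at the clamp of `(r + δ) / (2δ)`: convexity of `huber` and both bounds on the penalty
are read off from this. -/
noncomputable def huberProfile (δ r : ℝ) : ℝ :=
  if δ < r then r else if -δ ≤ r then (r + δ) ^ 2 / (4 * δ) else 0

lemma huber_eq_huberProfile {n : ℕ} (δ : ℝ) (a : EuclideanSpace ℝ (Fin n)) (b : ℝ)
    (x : EuclideanSpace ℝ (Fin n)) : huber δ a b x = huberProfile δ (⟪a, x⟫ - b) / ‖a‖ := by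
  unfold huber huberProfile
  split_ifs <;> ring

section HuberProfile

variable {δ : ℝ}

lemma affine_le_huberProfile (hδ : 0 < δ) {l : ℝ} (hl : l ∈ Icc (0 : ℝ) 1) (r : ℝ) :
    l * (r + δ) - δ * l ^ 2 ≤ huberProfile δ r := by
  obtain ⟨hl0, hl1⟩ := hl
  unfold huberProfile
  split_ifs with h₁ h₂
  · have hδl : δ * l ≤ r := (mul_le_of_le_one_right hδ.le hl1).trans h₁.le
    nlinarith [mul_nonneg (sub_nonneg.2 hl1) (sub_nonneg.2 hδl)]
  · rw [le_div_iff₀ (by positivity)]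
    nlinarith [sq_nonneg (r + δ - 2 * δ * l)]
  · nlinarith

lemma exists_affine_eq_huberProfile (hδ : 0 < δ) (r : ℝ) :
    ∃ l ∈ Icc (0 : ℝ) 1, l * (r + δ) - δ * l ^ 2 = huberProfile δ r := by
  unfold huberProfile
  split_ifs with h₁ h₂
  · exact ⟨1, right_mem_Icc.2 zero_le_one, by ring⟩
  · refine ⟨(r + δ) / (2 * δ), ⟨div_nonneg (by linarith) (by positivity), ?_⟩, ?_⟩
    · rw [div_le_one (by positivity)]; linarith
    · field_simp; ring
  · exact ⟨0, left_mem_Icc.2 zero_le_one, by ring⟩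

lemma huberProfile_le_of_nonpos (hδ : 0 < δ) {r : ℝ} (hr : r ≤ 0) : huberProfile δ r ≤ δ / 4 := by
  unfold huberProfile
  split_ifs with h₁ h₂
  · linarith
  · rw [div_le_div_iff₀ (by positivity) (by positivity)]
    nlinarith
  · positivity

end HuberProfile

section Huber

variable {n : ℕ} {ι : Type*} [Fintype ι] {δ : ℝ}

lemma convexOn_huber (hδ : 0 < δ) (a : EuclideanSpace ℝ (Fin n)) (b : ℝ) :
    ConvexOn ℝ univ (huber δ a b) := by
  refine ⟨convex_univ, fun x _ y _ s t hs ht hst => ?_⟩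
  simp only [huber_eq_huberProfile, smul_eq_mul, inner_add_right, real_inner_smul_right]
  obtain ⟨l, hl, heq⟩ := exists_affine_eq_huberProfile hδ (s * ⟪a, x⟫ + t * ⟪a, y⟫ - b)
  have hx := affine_le_huberProfile hδ hl (⟪a, x⟫ - b)
  have hy := affine_le_huberProfile hδ hl (⟪a, y⟫ - b)
  rw [← heq, ← mul_div_assoc, ← mul_div_assoc, ← add_div]
  refine div_le_div_of_nonneg_right ?_ (norm_nonneg a)
  have hsplit : l * (s * ⟪a, x⟫ + t * ⟪a, y⟫ - b + δ) - δ * l ^ 2 =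
      s * (l * (⟪a, x⟫ - b + δ) - δ * l ^ 2) + t * (l * (⟪a, y⟫ - b + δ) - δ * l ^ 2) := by
    linear_combination (δ * l ^ 2 - l * (δ - b)) * hst
  rw [hsplit]
  gcongr

lemma huber_le_of_inner_le (hδ : 0 < δ) (a : EuclideanSpace ℝ (Fin n)) (b : ℝ)
    {x : EuclideanSpace ℝ (Fin n)} (hx : ⟪a, x⟫ ≤ b) :
    huber δ a b x ≤ δ / (4 * ‖a‖) := by
  rw [huber_eq_huberProfile, ← div_div]
  exact div_le_div_of_nonneg_right (huberProfile_le_of_nonpos hδ (sub_nonpos.2 hx))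
    (norm_nonneg a)

lemma infDist_halfSpace_le_huber (hδ : 0 < δ) {a : EuclideanSpace ℝ (Fin n)} (ha : a ≠ 0)
    (b : ℝ) (x : EuclideanSpace ℝ (Fin n)) :
    infDist x {y | ⟪a, y⟫ ≤ b} ≤ huber δ a b x := by
  have hprofile (l : ℝ) (hl : l ∈ Icc (0 : ℝ) 1) := affine_le_huberProfile hδ hl (⟪a, x⟫ - b)
  rw [huber_eq_huberProfile]
  by_cases hx : ⟪a, x⟫ ≤ b
  · rw [infDist_zero_of_mem (show x ∈ {y | ⟪a, y⟫ ≤ b} from hx)]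
    exact div_nonneg (by simpa using hprofile 0 (left_mem_Icc.2 zero_le_one)) (norm_nonneg a)
  · have hr : 0 < ⟪a, x⟫ - b := by linarith
    have hna : 0 < ‖a‖ := norm_pos_iff.2 ha
    -- the foot of the perpendicular from `x` to the boundary hyperplane
    set y := x - ((⟪a, x⟫ - b) / ‖a‖ ^ 2) • a
    have hy : ⟪a, y⟫ ≤ b := by
      simp only [y, inner_sub_right, real_inner_smul_right, real_inner_self_eq_norm_sq]
      field_simp
      linarith
    calc infDist x {y | ⟪a, y⟫ ≤ b} ≤ dist x y := infDist_le_dist_of_mem hy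
      _ = (⟪a, x⟫ - b) / ‖a‖ := by
        rw [dist_eq_norm, sub_sub_cancel, norm_smul, Real.norm_of_nonneg (by positivity)]
        field_simp
      _ ≤ huberProfile δ (⟪a, x⟫ - b) / ‖a‖ := by
        gcongr
        simpa using hprofile 1 (right_mem_Icc.2 zero_le_one)

lemma convexOn_sum_huber (hδ : 0 < δ)
    (a : ι → EuclideanSpace ℝ (Fin n)) (b : ι → ℝ) :
    ConvexOn ℝ univ (fun x => ∑ i, huber δ (a i) (b i) x) := by
  simpa [Finset.sum_fn] using Finset.sum_induction (s := Finset.univ)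
    (fun i => huber δ (a i) (b i)) (ConvexOn ℝ univ) (fun _ _ => ConvexOn.add)
    (convexOn_const 0 convex_univ) (fun i _ => convexOn_huber hδ (a i) (b i))

lemma infDist_le_mul_sum_huber (hδ : 0 < δ)
    {a : ι → EuclideanSpace ℝ (Fin n)} (ha : ∀ i, a i ≠ 0) (b : ι → ℝ)
    {X : Set (EuclideanSpace ℝ (Fin n))} {β : ℝ} (hβ : 0 ≤ β) {x : EuclideanSpace ℝ (Fin n)}
    (hHoffman : infDist x X ≤ β * ∑ i, infDist x {y | ⟪a i, y⟫ ≤ b i}) :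
    infDist x X ≤ β * ∑ i, huber δ (a i) (b i) x :=
  hHoffman.trans <| by
    gcongr with i
    exact infDist_halfSpace_le_huber hδ (ha i) (b i) x

lemma sum_huber_le_of_forall_inner_le (hδ : 0 < δ)
    {a : ι → EuclideanSpace ℝ (Fin n)} (ha : ∀ i, a i ≠ 0) {b : ι → ℝ}
    {x : EuclideanSpace ℝ (Fin n)} (hx : ∀ i, ⟪a i, x⟫ ≤ b i) :
    ∑ i, huber δ (a i) (b i) x ≤ Fintype.card ι * (δ / (4 * ⨅ i, ‖a i‖)) := by
  have hterm (i : ι) : huber δ (a i) (b i) x ≤ δ / (4 * ⨅ i, ‖a i‖) := by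
    have : Nonempty ι := ⟨i⟩
    obtain ⟨j, hj⟩ := exists_eq_ciInf_of_finite (f := fun i => ‖a i‖)
    have hA : 0 < ⨅ i, ‖a i‖ := hj ▸ norm_pos_iff.2 (ha j)
    refine (huber_le_of_inner_le hδ (a i) (b i) (hx i)).trans ?_
    gcongr
    exact ciInf_le (finite_range _).bddBelow i
  refine (Finset.sum_le_sum fun i _ => hterm i).trans_eq ?_
  simp

end Huber

theorem penalized_error_bound_general {n m : ℕ} (hm : 0 < m) (μ : ℝ)
    (f : EuclideanSpace ℝ (Fin n) → ℝ) (hf : StrongConvexOn Set.univ μ f)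
    (hdf : Differentiable ℝ f)
    (a : Fin m → EuclideanSpace ℝ (Fin n)) (ha : ∀ i, a i ≠ 0) (b : Fin m → ℝ)
    (X : Set (EuclideanSpace ℝ (Fin n)))
    (hX : X = {x | ∀ i, ⟪a i, x⟫ ≤ b i})
    (xstar : EuclideanSpace ℝ (Fin n)) (hxstarX : xstar ∈ X) (hxstar : IsMinOn f X xstar)
    (γ δ : ℝ) (hγ : 0 < γ) (hδ : 0 < δ)
    (xg : EuclideanSpace ℝ (Fin n))
    (hxg : IsMinOn (fun x => f x + (γ / m) * ∑ i, huber δ (a i) (b i) x) Set.univ xg)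
    (p : EuclideanSpace ℝ (Fin n)) (hpX : p ∈ X) (hproj : ∀ y ∈ X, ‖xg - p‖ ≤ ‖xg - y‖)
    (β : ℝ) (hβ : 0 < β)
    (hHoffman : ∀ x, Metric.infDist x X ≤
      β * ∑ i, Metric.infDist x {y : EuclideanSpace ℝ (Fin n) | ⟪a i, y⟫ ≤ b i})
    (L : ℝ) (hLbound : ∀ z ∈ segment ℝ xg p, ‖gradient f z‖ ≤ L) :
    μ / 2 * ‖xstar - xg‖ ^ 2 + μ / 2 * ‖xstar - p‖ ^ 2 +
        (γ / (4 * m * β) - L) * Metric.infDist xg X ≤ γ * δ / (4 * ⨅ i, ‖a i‖) := by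
  set P := fun x => (γ / m) * ∑ i, huber δ (a i) (b i) x
  have hm' : (0 : ℝ) < m := Nat.cast_pos.2 hm
  have hd : infDist xg X = ‖p - xg‖ := by
    rw [infDist_eq_dist_of_forall_dist_le hpX (by simpa [dist_eq_norm] using hproj), dist_eq_norm']
  set d := infDist xg X
  have hgrowth_p : f xstar + μ / 2 * ‖p - xstar‖ ^ 2 ≤ f p :=
    StrongConvexOn.add_sq_norm_sub_le_of_isMinOn
      ⟨hX ▸ convex_setOf_forall_inner_le a b, fun _ _ _ _ => hf.2 trivial trivial⟩
      hxstarX hpX hxstar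
  have hF : StrongConvexOn univ μ (f + P) :=
    hf.add_convexOn ((convexOn_sum_huber hδ a b).smul (by positivity))
  have hgrowth_xg : f xg + P xg + μ / 2 * ‖xstar - xg‖ ^ 2 ≤ f xstar + P xstar :=
    hF.add_sq_norm_sub_le_of_isMinOn trivial trivial hxg
  have hPxg : γ / m * (d / β) ≤ P xg := mul_le_mul_of_nonneg_left
    ((div_le_iff₀' hβ).2 (infDist_le_mul_sum_huber hδ ha b hβ.le (hHoffman xg))) (by positivity)
  have hPxstar : P xstar ≤ γ * δ / (4 * ⨅ i, ‖a i‖) :=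
    calc P xstar ≤ γ / m * (Fintype.card (Fin m) * (δ / (4 * ⨅ i, ‖a i‖))) :=
          mul_le_mul_of_nonneg_left
            (sum_huber_le_of_forall_inner_le hδ ha (by rwa [hX] at hxstarX)) (by positivity)
      _ = γ * δ / (4 * ⨅ i, ‖a i‖) := by rw [Fintype.card_fin]; field_simp
  have hmean : f p - f xg ≤ L * d := hd ▸ sub_le_mul_norm_of_norm_gradient_le hdf hLbound
  have hcoef : γ / (4 * m * β) * d = γ / m * (d / β) / 4 := by field_simp
  have hPxg_nonneg : 0 ≤ γ / m * (d / β) := by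
    have := infDist_nonneg (x := xg) (s := X)
    positivity
  rw [norm_sub_rev xstar p]
  linarith

/-- Error-bound lemma: for the minimizer `x_{γδ}*` of the penalized objective, its projection
`p` onto the feasible set `X`, a Hoffman constant `β` and a gradient bound `L`, one has
`(μ/2)‖x* − x_{γδ}*‖² + (μ/2)‖x* − p‖² + (γ/(4mβ) − L)·dist(x_{γδ}*, X) ≤ γδ/(4α_min)`. -/
theorem penalized_error_bound {n m : ℕ} (hm : 0 < m) (μ : ℝ) (hμ : 0 < μ)
    (f : EuclideanSpace ℝ (Fin n) → ℝ) (hf : StrongConvexOn Set.univ μ f)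
    (hdf : Differentiable ℝ f)
    (a : Fin m → EuclideanSpace ℝ (Fin n)) (ha : ∀ i, a i ≠ 0) (b : Fin m → ℝ)
    (X : Set (EuclideanSpace ℝ (Fin n)))
    (hX : X = {x | ∀ i, ⟪a i, x⟫ ≤ b i}) (hXne : X.Nonempty)
    (xstar : EuclideanSpace ℝ (Fin n)) (hxstarX : xstar ∈ X) (hxstar : IsMinOn f X xstar)
    (γ δ : ℝ) (hγ : 0 < γ) (hδ : 0 < δ)
    (xg : EuclideanSpace ℝ (Fin n))
    (hxg : IsMinOn (fun x => f x + (γ / m) * ∑ i, huber δ (a i) (b i) x) Set.univ xg)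
    (p : EuclideanSpace ℝ (Fin n)) (hpX : p ∈ X) (hproj : ∀ y ∈ X, ‖xg - p‖ ≤ ‖xg - y‖)
    (β : ℝ) (hβ : 0 < β)
    (hHoffman : ∀ x, Metric.infDist x X ≤
      β * ∑ i, Metric.infDist x {y : EuclideanSpace ℝ (Fin n) | ⟪a i, y⟫ ≤ b i})
    (L : ℝ) (hL : 0 < L) (hLbound : ∀ z ∈ segment ℝ xg p, ‖gradient f z‖ ≤ L) :
    μ / 2 * ‖xstar - xg‖ ^ 2 + μ / 2 * ‖xstar - p‖ ^ 2 +
        (γ / (4 * m * β) - L) * Metric.infDist xg X ≤ γ * δ / (4 * ⨅ i, ‖a i‖) :=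
  penalized_error_bound_general hm μ f hf hdf a ha b X hX xstar hxstarX hxstar γ δ hγ hδ xg hxg p
    hpX hproj β hβ hHoffman L hLbound
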